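/- Suppose φ is moderate, dualizable, associative and commutative. If P ∈ K⟨Y⟩ is primitive for Δ_{⧢_φ}, then π_1(P) = P, and for all positive integers k, n one has π_n(P^k) = δ_{k,n} P^k, where π_n = (1/n!) π_1^{⋆n} is the n-th Eulerian projector for the convolution product f ⋆ g = conc ∘ (f ⊗ g) ∘ Δ_{⧢_φ}. -/

import Mathlib

noncomputable section

open Finsupp

variable {K : Type*} [CommRing K] [Algebra ℚ K]
variable {Y : Type*} [DecidableEq Y]

/-- The word `w ∈ Y*` viewed as a basis element of `K⟨Y⟩`. -/
def word (w : List Y) : List Y →₀ K := Finsupp.single w 1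

/-- Left concatenation by a letter, as a linear endomorphism of `K⟨Y⟩`. -/
def consL (a : Y) : (List Y →₀ K) →ₗ[K] (List Y →₀ K) :=
  Finsupp.lmapDomain K K (List.cons a)

/-- `m` is the `φ`-deformed shuffle product: it satisfies the initialization
`1 ⧢ w = w ⧢ 1 = w` and the recursion
`(au) ⧢ (bv) = a (u ⧢ bv) + b (au ⧢ v) + φ(a,b)(u ⧢ v)`. -/
def IsPhiShuffle (φ : Y → Y → (Y →₀ K))
    (m : (List Y →₀ K) →ₗ[K] (List Y →₀ K) →ₗ[K] (List Y →₀ K)) : Prop :=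
  (∀ w : List Y, m (word []) (word w) = word w) ∧
  (∀ w : List Y, m (word w) (word []) = word w) ∧
  ∀ (a b : Y) (u v : List Y),
    m (word (a :: u)) (word (b :: v)) =
      consL a (m (word u) (word (b :: v))) + consL b (m (word (a :: u)) (word v)) +
      (φ a b).sum fun c k => k • consL c (m (word u) (word v))

/-- Bilinear extension of `φ` to `KY`. -/
def phiExt (φ : Y → Y → (Y →₀ K)) (p q : Y →₀ K) : Y →₀ K :=
  p.sum fun a ka => q.sum fun b kb => (ka * kb) • φ a b

/-- The extension of `φ` to `KY ⊗ KY → KY` is associative. -/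
def PhiAssoc (φ : Y → Y → (Y →₀ K)) : Prop :=
  ∀ a b c : Y, phiExt φ (φ a b) (Finsupp.single c 1) = phiExt φ (Finsupp.single a 1) (φ b c)

/-- The extension of `φ` is commutative. -/
def PhiComm (φ : Y → Y → (Y →₀ K)) : Prop := ∀ a b : Y, φ a b = φ b a

/-- `φ` is dualizable: for every letter `z` only finitely many pairs of letters
have `z` in the support of their `φ`-product. -/
def PhiDualizable (φ : Y → Y → (Y →₀ K)) : Prop :=
  ∀ z : Y, {p : Y × Y | φ p.1 p.2 z ≠ 0}.Finite

/-- Extension of an associative `φ` to nonempty words: `φ(xw) = φ(x, φ(w))`. -/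
def phiWord (φ : Y → Y → (Y →₀ K)) : List Y → (Y →₀ K)
  | [] => 0
  | [x] => Finsupp.single x 1
  | x :: y :: w => (phiWord φ (y :: w)).sum fun b k => k • φ x b

/-- `φ` is moderate: for every letter `y`, only finitely many nonempty words `w`
satisfy `⟨y, φ(w)⟩ ≠ 0`. -/
def PhiModerate (φ : Y → Y → (Y →₀ K)) : Prop :=
  ∀ y : Y, {w : List Y | w ≠ [] ∧ phiWord φ w y ≠ 0}.Finite

/-- Pairing of two polynomials (the words form an orthonormal basis). -/
def pairPP (p q : List Y →₀ K) : K := p.sum fun w a => a * q w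

/-- Pairing `⟨S, p⟩` of a series with a polynomial. -/
def pairPS (S : List Y → K) (p : List Y →₀ K) : K := p.sum fun w a => a * S w

/-- Concatenation product on `K⟨Y⟩`. -/
def concP (p q : List Y →₀ K) : List Y →₀ K :=
  p.sum fun u a => q.sum fun v b => Finsupp.single (u ++ v) (a * b)

/-- Concatenation powers. -/
def concPow (p : List Y →₀ K) : ℕ → (List Y →₀ K)
  | 0 => word []
  | n + 1 => concP p (concPow p n)

/-- Powers with respect to a bilinear product `m`. -/
def mpow (m : (List Y →₀ K) →ₗ[K] (List Y →₀ K) →ₗ[K] (List Y →₀ K))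
    (p : List Y →₀ K) : ℕ → (List Y →₀ K)
  | 0 => word []
  | n + 1 => m p (mpow m p n)

/-- `m`-product of a list of polynomials. -/
def prodM (m : (List Y →₀ K) →ₗ[K] (List Y →₀ K) →ₗ[K] (List Y →₀ K))
    (L : List (List Y →₀ K)) : List Y →₀ K :=
  L.foldr (fun p acc => m p acc) (word [])

/-- The unit series. -/
def oneS : List Y → K := fun w => if w = [] then 1 else 0

/-- Concatenation (Cauchy) product of series. -/
def mulS (S T : List Y → K) : List Y → K := fun w =>
  ∑ i ∈ Finset.range (w.length + 1), S (w.take i) * T (w.drop i)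

/-- Concatenation powers of a series. -/
def powS (S : List Y → K) : ℕ → (List Y → K)
  | 0 => oneS
  | n + 1 => mulS S (powS S n)

/-- Concatenation product of a list of series. -/
def prodS (L : List (List Y → K)) : List Y → K := L.foldr (fun S acc => mulS S acc) oneS

/-- The coproduct `Δ_{⧢_φ}` dual to `m`, on series: `Δ(S)(u,v) = ⟨S, u ⧢_φ v⟩`. -/
def DeltaS (m : (List Y →₀ K) →ₗ[K] (List Y →₀ K) →ₗ[K] (List Y →₀ K))
    (S : List Y → K) : List Y × List Y → K :=
  fun p => pairPS S (m (word p.1) (word p.2))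

/-- `S` is primitive: `Δ_{⧢_φ}(S) = S ⊗ 1 + 1 ⊗ S`. -/
def PrimS (m : (List Y →₀ K) →ₗ[K] (List Y →₀ K) →ₗ[K] (List Y →₀ K))
    (S : List Y → K) : Prop :=
  ∀ u v : List Y, DeltaS m S (u, v) =
    (if v = [] then S u else 0) + (if u = [] then S v else 0)

/-- `S` is group-like: `⟨S,1⟩ = 1` and `Δ_{⧢_φ}(S) = S ⊗ S`. -/
def GroupLikeS (m : (List Y →₀ K) →ₗ[K] (List Y →₀ K) →ₗ[K] (List Y →₀ K))
    (S : List Y → K) : Prop :=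
  S [] = 1 ∧ ∀ u v : List Y, DeltaS m S (u, v) = S u * S v

/-- `Δfn` is the (finitely supported) dual coproduct witnessing dualizability of `m`:
`⟨u ⧢_φ v, w⟩ = ⟨u ⊗ v, Δ(w)⟩`. -/
def IsDualWitness (m : (List Y →₀ K) →ₗ[K] (List Y →₀ K) →ₗ[K] (List Y →₀ K))
    (Δfn : List Y → (List Y × List Y →₀ K)) : Prop :=
  ∀ u v w : List Y, (m (word u) (word v)) w = Δfn w (u, v)

/-- All factorizations of a word into nonempty blocks. -/
def cuts : List Y → List (List (List Y))
  | [] => [[]]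
  | a :: w =>
    (cuts w).flatMap fun parts =>
      match parts with
      | [] => [[[a]]]
      | p :: ps => [[a] :: p :: ps, (a :: p) :: ps]

/-- The extended Eulerian projector `π₁` on series:
`π₁(S) = Σ_{k≥1} ((-1)^{k-1}/k) Σ_{u_1⋯u_k = w, u_i ∈ Y⁺} ⟨S, u_1 ⧢_φ ⋯ ⧢_φ u_k⟩ w`. -/
def piOneS (m : (List Y →₀ K) →ₗ[K] (List Y →₀ K) →ₗ[K] (List Y →₀ K))
    (S : List Y → K) : List Y → K := fun w =>
  ((cuts w).map fun parts =>
    algebraMap ℚ K ((-1) ^ (parts.length - 1) / (parts.length : ℚ)) *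
      pairPS S (prodM m (parts.map word))).sum

/-- Logarithm of a series `S` with `⟨S,1⟩ = 1`. -/
def logS (S : List Y → K) : List Y → K := fun w =>
  ∑ n ∈ Finset.Icc 1 w.length,
    algebraMap ℚ K ((-1) ^ (n - 1) / (n : ℚ)) * powS (fun t => S t - oneS t) n w

/-- Convolution of endomorphisms (valued in series), using a dual coproduct witness. -/
def convT (Δfn : List Y → (List Y × List Y →₀ K))
    (f g : (List Y →₀ K) → (List Y → K)) : (List Y →₀ K) → (List Y → K) :=
  fun P w => P.sum fun t a =>
    a * (Δfn t).sum fun p c => c * mulS (f (word p.1)) (g (word p.2)) w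

/-- The convolution unit `e = 1 ∘ ε`. -/
def eT : (List Y →₀ K) → (List Y → K) := fun P w => if w = [] then P [] else 0

/-- Convolution powers `π₁^{⋆ n}` of the Eulerian projector. -/
def convPowPi (m : (List Y →₀ K) →ₗ[K] (List Y →₀ K) →ₗ[K] (List Y →₀ K))
    (Δfn : List Y → (List Y × List Y →₀ K)) : ℕ → ((List Y →₀ K) → (List Y → K))
  | 0 => eT
  | n + 1 => convT Δfn (fun P => piOneS m fun t => P t) (convPowPi m Δfn n)

/-- Lyndon words: nonempty and lexicographically smaller than each proper suffix. -/
def IsLyndon [LinearOrder Y] (w : List Y) : Prop :=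
  w ≠ [] ∧ ∀ u v : List Y, u ≠ [] → v ≠ [] → w = u ++ v → List.Lex (· < ·) w v

/-- Strictly decreasing lists of Lyndon words with positive exponents,
indexing monomials in Lyndon words. -/
abbrev DecLyn (Y : Type*) [LinearOrder Y] :=
  {s : List (List Y × ℕ) // (∀ p ∈ s, IsLyndon p.1 ∧ 0 < p.2) ∧
    s.Chain' fun a b => List.Lex (· < ·) b.1 a.1}

/-- `⧢_φ`-monomial `l₁^{⧢ i₁} ⧢ ⋯ ⧢ l_k^{⧢ i_k}`. -/
def shMonomial (m : (List Y →₀ K) →ₗ[K] (List Y →₀ K) →ₗ[K] (List Y →₀ K))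
    (s : List (List Y × ℕ)) : List Y →₀ K :=
  s.foldr (fun p acc => m (mpow m (word p.1) p.2) acc) (word [])

/-- Concatenation monomial `Π_{l₁}^{i₁} ⋯ Π_{l_k}^{i_k}` in a family `Pi`. -/
def concMonomial (Pi : List Y → (List Y →₀ K)) (s : List (List Y × ℕ)) : List Y →₀ K :=
  s.foldr (fun p acc => concP (concPow (Pi p.1) p.2) acc) (word [])

/-- The singleton index `l¹ ∈ DecLyn Y` attached to a Lyndon word. -/
def singleIdx [LinearOrder Y] (l : List Y) (hl : IsLyndon l) : DecLyn Y :=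
  ⟨[(l, 1)], ⟨fun p hp => by
      rw [List.mem_singleton] at hp; subst hp; exact ⟨hl, Nat.one_pos⟩,
    List.isChain_singleton _⟩⟩

/-- `(s, r)` is the standard factorization of the Lyndon word `l`:
`l = sr` with `s, r` nonempty and `r` the lexicographically least proper suffix. -/
def StdFact [LinearOrder Y] (l s r : List Y) : Prop :=
  l = s ++ r ∧ s ≠ [] ∧ r ≠ [] ∧
  ∀ s' r' : List Y, l = s' ++ r' → s' ≠ [] → r' ≠ [] → r = r' ∨ List.Lex (· < ·) r r'

/-- `Pi` is the family defined by `Π_y = π₁(y)` on letters and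
`Π_l = [Π_s, Π_r]` for the standard factorization `(s,r)` of a Lyndon word `l`. -/
def IsPiFamily [LinearOrder Y]
    (m : (List Y →₀ K) →ₗ[K] (List Y →₀ K) →ₗ[K] (List Y →₀ K))
    (Pi : List Y → (List Y →₀ K)) : Prop :=
  (∀ y : Y, ∀ w : List Y, Pi [y] w = piOneS m (fun t => (word [y] : List Y →₀ K) t) w) ∧
  ∀ l s r : List Y, IsLyndon l → StdFact l s r →
    Pi l = concP (Pi s) (Pi r) - concP (Pi r) (Pi s)

/-!
For primitive `P` the coproduct of `⧢_φ` is multiplicative for concatenation, so `P^k` pairs with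
shuffles binomially: `⟨P^k, u ⧢_φ v⟩ = Σ_{i+j=k} C(k,i) ⟨P^i, u⟩ ⟨P^j, v⟩`. Hence summing
`⟨P^k, u_1 ⧢_φ ⋯ ⧢_φ u_j⟩` over the factorizations `w = u_1 ⋯ u_j` into nonempty blocks gives
`⟨P^k, w⟩` times the number `k! [X^k] (e^X - 1)^j` of surjections of `k` points onto `j` blocks.
Weighting by `(-1)^{j-1}/j` and summing over `j` gives `k! [X^k] log (1 + (e^X - 1)) = δ_{k,1}`,
i.e. `π₁(P^k) = δ_{k,1} P^k`. The same binomial rule expands `π₁^{⋆(n+1)}(P^k)` as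
`Σ_i C(k,i) π₁(P^i) π₁^{⋆n}(P^{k-i})`, and induction on `n` gives `π₁^{⋆n}(P^k) = δ_{k,n} n! P^k`.
-/

lemma List.sum_range_take_drop_cons {α M : Type*} [AddCommMonoid M] (F : List α → List α → M)
    (a : α) (u : List α) :
    ∑ i ∈ Finset.range ((a :: u).length + 1), F ((a :: u).take i) ((a :: u).drop i) =
      F [] (a :: u) + ∑ i ∈ Finset.range (u.length + 1), F (a :: u.take i) (u.drop i) := by
  rw [List.length_cons, Finset.sum_range_succ', add_comm]
  rfl

lemma List.sum_range_ite_take_drop {α M : Type*} [DecidableEq α] [AddCommMonoid M]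
    (w u v : List α) (c : M) :
    ∑ i ∈ Finset.range (w.length + 1), (if w.take i = u ∧ w.drop i = v then c else 0) =
      if u ++ v = w then c else 0 := by
  have key : ∀ i ∈ Finset.range (w.length + 1),
      (w.take i = u ∧ w.drop i = v) ↔ (u ++ v = w ∧ u.length = i) := by
    intro i hi
    have hi : i ≤ w.length := Nat.lt_succ_iff.mp (Finset.mem_range.mp hi)
    constructor
    · rintro ⟨rfl, rfl⟩
      exact ⟨List.take_append_drop i w, List.length_take_of_le hi⟩
    · rintro ⟨rfl, rfl⟩
      exact ⟨List.take_left, List.drop_left⟩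
  rw [Finset.sum_congr rfl fun i hi => if_congr (key i hi) rfl rfl]
  by_cases h : u ++ v = w
  · subst h
    simp [Finset.sum_ite_eq]
  · simp [h]

lemma List.take_eq_nil_iff_of_mem_range {α : Type*} {v : List α} {j : ℕ}
    (hj : j ∈ Finset.range (v.length + 1)) : v.take j = [] ↔ j = 0 := by
  rw [List.take_eq_nil_iff, or_iff_left_iff_imp]
  rintro rfl
  simpa using hj

lemma List.sum_map_finset_sum {α ι M : Type*} [AddCommMonoid M] (L : List α) (s : Finset ι)
    (f : ι → α → M) : (L.map fun x => ∑ i ∈ s, f i x).sum = ∑ i ∈ s, (L.map (f i)).sum := by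
  induction L with
  | nil => simp
  | cons a L ih => simp [ih, Finset.sum_add_distrib]

section Words
omit [Algebra ℚ K]

lemma word_apply (u w : List Y) : (word u : List Y →₀ K) w = if u = w then 1 else 0 :=
  Finsupp.single_apply

lemma word_apply_append (v w₁ w₂ : List Y) :
    (word v : List Y →₀ K) (w₁ ++ w₂) =
      ∑ j ∈ Finset.range (v.length + 1),
        (word (v.take j) : List Y →₀ K) w₁ * (word (v.drop j) : List Y →₀ K) w₂ := by
  simp only [word_apply, ite_zero_mul_ite_zero, mul_one]
  rw [List.sum_range_ite_take_drop]
  exact if_congr eq_comm rfl rfl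

lemma consL_apply_cons (c z : Y) (q : List Y →₀ K) (t : List Y) :
    consL c q (z :: t) = if c = z then q t else 0 := by
  by_cases h : c = z
  · subst h
    rw [if_pos rfl]
    exact Finsupp.mapDomain_apply List.cons_injective q t
  · rw [if_neg h]
    exact Finsupp.mapDomain_of_notMem_range q _
      (by rintro ⟨s, hs⟩; exact h (List.cons_eq_cons.mp hs).1)

omit [DecidableEq Y] in
lemma consL_apply_nil (c : Y) (q : List Y →₀ K) : consL c q [] = 0 :=
  Finsupp.mapDomain_of_notMem_range q _ (by rintro ⟨s, hs⟩; exact List.cons_ne_nil _ _ hs)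

lemma sum_smul_consL_apply_cons (x : Y →₀ K) (q : List Y →₀ K) (z : Y) (t : List Y) :
    (x.sum fun c k => k • consL c q) (z :: t) = x z * q t := by
  simp only [Finsupp.sum, Finsupp.finsetSum_apply, Finsupp.smul_apply, consL_apply_cons,
    smul_eq_mul, mul_ite, mul_zero, Finset.sum_ite_eq']
  split_ifs with h
  · rfl
  · rw [Finsupp.notMem_support_iff.mp h, zero_mul]

omit [DecidableEq Y] in
lemma sum_smul_consL_apply_nil (x : Y →₀ K) (q : List Y →₀ K) :
    (x.sum fun c k => k • consL c q) [] = 0 := by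
  simp [Finsupp.sum_apply, consL_apply_nil]

end Words

section Shuffle
omit [Algebra ℚ K]

def shuffleSplitSum (m : (List Y →₀ K) →ₗ[K] (List Y →₀ K) →ₗ[K] (List Y →₀ K))
    (u v w₁ w₂ : List Y) : K :=
  ∑ i ∈ Finset.range (u.length + 1), ∑ j ∈ Finset.range (v.length + 1),
    m (word (u.take i)) (word (v.take j)) w₁ * m (word (u.drop i)) (word (v.drop j)) w₂

variable {φ : Y → Y → (Y →₀ K)} {m : (List Y →₀ K) →ₗ[K] (List Y →₀ K) →ₗ[K] (List Y →₀ K)}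

omit [DecidableEq Y] in
lemma shuffleSplitSum_cons_left (a : Y) (u v w₁ w₂ : List Y) :
    shuffleSplitSum m (a :: u) v w₁ w₂ =
      ∑ j ∈ Finset.range (v.length + 1),
        m (word []) (word (v.take j)) w₁ * m (word (a :: u)) (word (v.drop j)) w₂ +
      ∑ i ∈ Finset.range (u.length + 1), ∑ j ∈ Finset.range (v.length + 1),
        m (word (a :: u.take i)) (word (v.take j)) w₁ * m (word (u.drop i)) (word (v.drop j)) w₂ :=
  List.sum_range_take_drop_cons (fun x y => ∑ j ∈ Finset.range (v.length + 1),
    m (word x) (word (v.take j)) w₁ * m (word y) (word (v.drop j)) w₂) a u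

omit [DecidableEq Y] in
lemma shuffleSplitSum_cons_right (b : Y) (u v w₁ w₂ : List Y) :
    shuffleSplitSum m u (b :: v) w₁ w₂ =
      ∑ i ∈ Finset.range (u.length + 1),
        m (word (u.take i)) (word []) w₁ * m (word (u.drop i)) (word (b :: v)) w₂ +
      ∑ i ∈ Finset.range (u.length + 1), ∑ j ∈ Finset.range (v.length + 1),
        m (word (u.take i)) (word (b :: v.take j)) w₁ *
          m (word (u.drop i)) (word (v.drop j)) w₂ := by
  rw [← Finset.sum_add_distrib]
  exact Finset.sum_congr rfl fun i _ => List.sum_range_take_drop_cons (fun x y =>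
    m (word (u.take i)) (word x) w₁ * m (word (u.drop i)) (word y) w₂) b v

namespace IsPhiShuffle

variable (hm : IsPhiShuffle φ m)
include hm

omit [DecidableEq Y] in
lemma nil_shuffle (w : List Y) : m (word []) (word w) = word w := hm.1 w

omit [DecidableEq Y] in
lemma shuffle_nil (w : List Y) : m (word w) (word []) = word w := hm.2.1 w

lemma apply_nil (u v : List Y) : m (word u) (word v) [] = if u = [] ∧ v = [] then 1 else 0 := by
  match u, v with
  | [], v => simp [hm.nil_shuffle, word_apply]
  | _ :: _, [] => simp [hm.shuffle_nil, word_apply]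
  | _ :: _, _ :: _ =>
    simp only [hm.2.2, Finsupp.add_apply, consL_apply_nil, sum_smul_consL_apply_nil]
    simp

lemma apply_cons_cons (a b z : Y) (u v t : List Y) :
    m (word (a :: u)) (word (b :: v)) (z :: t) =
      (if a = z then m (word u) (word (b :: v)) t else 0) +
      (if b = z then m (word (a :: u)) (word v) t else 0) +
      φ a b z * m (word u) (word v) t := by
  rw [hm.2.2]
  simp only [Finsupp.add_apply, consL_apply_cons, sum_smul_consL_apply_cons]

lemma shuffleSplitSum_nil_left (v w₁ w₂ : List Y) :
    shuffleSplitSum m [] v w₁ w₂ = m (word []) (word v) (w₁ ++ w₂) := by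
  simp [shuffleSplitSum, hm.nil_shuffle, word_apply_append]

lemma shuffleSplitSum_nil_right (u w₁ w₂ : List Y) :
    shuffleSplitSum m u [] w₁ w₂ = m (word u) (word []) (w₁ ++ w₂) := by
  simp [shuffleSplitSum, hm.shuffle_nil, word_apply_append]

lemma shuffleSplitSum_nil_prefix (u v w : List Y) :
    shuffleSplitSum m u v [] w = m (word u) (word v) w := by
  have take_ne_nil {x : List Y} {i : ℕ} (hi : i ∈ Finset.range (x.length + 1)) (h0 : i ≠ 0) :
      x.take i ≠ [] := by
    rw [Ne, List.take_eq_nil_iff, not_or]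
    exact ⟨h0, by rintro rfl; simp_all⟩
  unfold shuffleSplitSum
  rw [Finset.sum_eq_single_of_mem 0 (by simp), Finset.sum_eq_single_of_mem 0 (by simp)]
  · simp [hm.apply_nil]
  · intro j hj hj0
    simp [hm.apply_nil, take_ne_nil hj hj0]
  · intro i hi hi0
    refine Finset.sum_eq_zero fun j _ => ?_
    simp [hm.apply_nil, take_ne_nil hi hi0]

lemma shuffleSplitSum_cons_cons (a b z : Y) (u v w₁ w₂ : List Y) :
    shuffleSplitSum m (a :: u) (b :: v) (z :: w₁) w₂ =
      (if a = z then shuffleSplitSum m u (b :: v) w₁ w₂ else 0) +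
      (if b = z then shuffleSplitSum m (a :: u) v w₁ w₂ else 0) +
      φ a b z * shuffleSplitSum m u v w₁ w₂ := by
  rw [shuffleSplitSum_cons_left, shuffleSplitSum_cons_right b u, shuffleSplitSum_cons_left a u v]
  simp only [List.length_cons, Finset.sum_range_succ' (n := v.length + 1), List.take_succ_cons,
    List.drop_succ_cons, List.take_zero, List.drop_zero, hm.nil_shuffle, hm.shuffle_nil,
    hm.apply_cons_cons, word_apply, List.cons.injEq, List.nil_eq, reduceCtorEq,
    if_false, zero_mul, add_zero]
  by_cases ha : a = z <;> by_cases hb : b = z <;>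
    simp [ha, hb, shuffleSplitSum, Finset.sum_add_distrib, add_mul, Finset.mul_sum, mul_assoc] <;>
    abel

/-- The deconcatenation coproduct is multiplicative for `⧢_φ`. -/
theorem apply_append (u v w₁ w₂ : List Y) :
    m (word u) (word v) (w₁ ++ w₂) = shuffleSplitSum m u v w₁ w₂ := by
  induction w₁ generalizing u v with
  | nil => exact (hm.shuffleSplitSum_nil_prefix u v w₂).symm
  | cons z w₁ ih =>
    match u, v with
    | [], v => exact (hm.shuffleSplitSum_nil_left v _ w₂).symm
    | a :: u, [] => exact (hm.shuffleSplitSum_nil_right _ _ w₂).symm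
    | a :: u, b :: v =>
      rw [List.cons_append, hm.apply_cons_cons, ih, ih, ih, hm.shuffleSplitSum_cons_cons]

end IsPhiShuffle
end Shuffle

section Pairing
omit [Algebra ℚ K] [DecidableEq Y]

lemma pairPS_eq_linearCombination (S : List Y → K) (p : List Y →₀ K) :
    pairPS S p = Finsupp.linearCombination K S p := rfl

lemma pairPS_zero (S : List Y → K) : pairPS S 0 = 0 :=
  (Finsupp.linearCombination K S).map_zero

lemma pairPS_add (S : List Y → K) (p q : List Y →₀ K) :
    pairPS S (p + q) = pairPS S p + pairPS S q :=
  (Finsupp.linearCombination K S).map_add p q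

lemma pairPS_smul (S : List Y → K) (c : K) (p : List Y →₀ K) :
    pairPS S (c • p) = c * pairPS S p :=
  (Finsupp.linearCombination K S).map_smul c p

lemma pairPS_word (S : List Y → K) (w : List Y) : pairPS S (word w) = S w := by
  simp [pairPS_eq_linearCombination, word]

lemma pairPS_eq_sum (S : List Y → K) (p : List Y →₀ K) (A : Finset (List Y))
    (hA : p.support ⊆ A) : pairPS S p = ∑ w ∈ A, p w * S w :=
  Finsupp.sum_of_support_subset p hA _ fun _ _ => zero_mul _

lemma pairPS_comm (p q : List Y →₀ K) : pairPS ⇑p q = pairPS ⇑q p := by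
  classical
  rw [pairPS_eq_sum _ _ _ Finset.subset_union_left, pairPS_eq_sum _ _ _ Finset.subset_union_right]
  exact Finset.sum_congr rfl fun _ _ => mul_comm _ _

lemma pairPS_single_left (x : List Y) (a : K) (r : List Y →₀ K) :
    pairPS ⇑(Finsupp.single x a) r = a * r x := by
  simp [pairPS_comm _ r, pairPS_eq_linearCombination]

lemma pairPS_word_left (x : List Y) (r : List Y →₀ K) : pairPS ⇑(word x : List Y →₀ K) r = r x := by
  rw [word, pairPS_single_left, one_mul]

lemma pairPS_zero_left (r : List Y →₀ K) : pairPS 0 r = 0 := by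
  simp [pairPS_eq_linearCombination]

lemma pairPS_coe_add (p q r : List Y →₀ K) :
    pairPS ⇑(p + q) r = pairPS ⇑p r + pairPS ⇑q r := by
  simp only [pairPS_comm _ r, pairPS_eq_linearCombination, map_add]

end Pairing

section Concatenation
omit [Algebra ℚ K]

omit [DecidableEq Y] in
lemma concP_zero_left (q : List Y →₀ K) : concP 0 q = 0 := by
  simp [concP]

omit [DecidableEq Y] in
lemma concP_zero_right (p : List Y →₀ K) : concP p 0 = 0 := by
  simp [concP]

omit [DecidableEq Y] in
lemma concP_single_single (u v : List Y) (a b : K) :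
    concP (Finsupp.single u a) (Finsupp.single v b) = Finsupp.single (u ++ v) (a * b) := by
  simp [concP]

omit [DecidableEq Y] in
lemma concP_add_left (p₁ p₂ q : List Y →₀ K) :
    concP (p₁ + p₂) q = concP p₁ q + concP p₂ q := by
  unfold concP
  refine Finsupp.sum_add_index' (fun _ => by simp) fun u a₁ a₂ => ?_
  rw [← Finsupp.sum_add]
  exact Finsupp.sum_congr fun v _ => by rw [add_mul, Finsupp.single_add]

omit [DecidableEq Y] in
lemma concP_add_right (p q₁ q₂ : List Y →₀ K) :
    concP p (q₁ + q₂) = concP p q₁ + concP p q₂ := by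
  unfold concP
  rw [← Finsupp.sum_add]
  refine Finsupp.sum_congr fun u _ => Finsupp.sum_add_index' (fun _ => by simp) fun v b₁ b₂ => ?_
  rw [mul_add, Finsupp.single_add]

omit [DecidableEq Y] in
lemma concP_apply (p q : List Y →₀ K) (w : List Y) :
    concP p q w = ∑ i ∈ Finset.range (w.length + 1), p (w.take i) * q (w.drop i) := by
  classical
  induction p using Finsupp.induction_linear with
  | zero => simp [concP_zero_left]
  | add p₁ p₂ h₁ h₂ =>
    simp only [concP_add_left, Finsupp.add_apply, h₁, h₂, add_mul, Finset.sum_add_distrib]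
  | single u a =>
    induction q using Finsupp.induction_linear with
    | zero => simp [concP_zero_right]
    | add q₁ q₂ h₁ h₂ =>
      simp only [concP_add_right, Finsupp.add_apply, h₁, h₂, mul_add, Finset.sum_add_distrib]
    | single v b =>
      simp only [concP_single_single, Finsupp.single_apply, ite_zero_mul_ite_zero]
      rw [← List.sum_range_ite_take_drop w u v]
      exact Finset.sum_congr rfl fun i _ => if_congr (by rw [eq_comm, @eq_comm _ v]) rfl rfl

omit [DecidableEq Y] in
lemma concP_word_nil_left (q : List Y →₀ K) : concP (word []) q = q := by
  induction q using Finsupp.induction_linear with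
  | zero => exact concP_zero_right _
  | add q₁ q₂ h₁ h₂ => rw [concP_add_right, h₁, h₂]
  | single v b => rw [word, concP_single_single, List.nil_append, one_mul]

omit [DecidableEq Y] in
lemma concP_word_nil_right (p : List Y →₀ K) : concP p (word []) = p := by
  induction p using Finsupp.induction_linear with
  | zero => exact concP_zero_left _
  | add p₁ p₂ h₁ h₂ => rw [concP_add_left, h₁, h₂]
  | single u a => rw [word, concP_single_single, List.append_nil, mul_one]

omit [DecidableEq Y] in
lemma concP_assoc (p q r : List Y →₀ K) : concP (concP p q) r = concP p (concP q r) := by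
  induction p using Finsupp.induction_linear with
  | zero => simp [concP_zero_left]
  | add p₁ p₂ h₁ h₂ => rw [concP_add_left, concP_add_left, concP_add_left, h₁, h₂]
  | single u a =>
    induction q using Finsupp.induction_linear with
    | zero => simp [concP_zero_left, concP_zero_right]
    | add q₁ q₂ h₁ h₂ =>
      rw [concP_add_right, concP_add_left, concP_add_left, concP_add_right, h₁, h₂]
    | single v b =>
      induction r using Finsupp.induction_linear with
      | zero => simp [concP_zero_right]
      | add r₁ r₂ h₁ h₂ => rw [concP_add_right, concP_add_right, concP_add_right, h₁, h₂]
      | single t c => simp only [concP_single_single, List.append_assoc, mul_assoc]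

omit [DecidableEq Y] in
lemma concPow_add (P : List Y →₀ K) (i j : ℕ) :
    concP (concPow P i) (concPow P j) = concPow P (i + j) := by
  induction i with
  | zero => rw [Nat.zero_add, concPow, concP_word_nil_left]
  | succ i ih => rw [concPow, concP_assoc, ih, Nat.succ_add, concPow]

omit [DecidableEq Y] in
lemma concPow_one (P : List Y →₀ K) : concPow P 1 = P :=
  concP_word_nil_right P

section
variable {P : List Y →₀ K} (hP0 : P [] = 0)
include hP0

lemma concPow_apply_nil (k : ℕ) : concPow P k [] = if k = 0 then 1 else 0 := by
  cases k with
  | zero => simp [concPow, word_apply]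
  | succ k => simp [concPow, concP_apply, hP0]

omit [DecidableEq Y] in
lemma concPow_apply_eq_zero_of_length_lt {k : ℕ} {w : List Y} (h : w.length < k) :
    concPow P k w = 0 := by
  induction k generalizing w with
  | zero => omega
  | succ k ih =>
    rw [concPow, concP_apply]
    refine Finset.sum_eq_zero fun i hi => ?_
    cases i with
    | zero => simp [hP0]
    | succ i =>
      have := Finset.mem_range.mp hi
      rw [ih (by rw [List.length_drop]; omega), mul_zero]

lemma sum_range_concPow_take_succ_mul (a b : ℕ) (w : List Y) :
    ∑ i ∈ Finset.range w.length, concPow P a (w.take (i + 1)) * concPow P b (w.drop (i + 1)) =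
      if a = 0 then 0 else concPow P (a + b) w := by
  have h := concP_apply (concPow P a) (concPow P b) w
  rw [concPow_add, Finset.sum_range_succ', List.take_zero, List.drop_zero,
    concPow_apply_nil hP0] at h
  split_ifs at h ⊢ with ha
  · subst ha
    simpa using h
  · simpa using h.symm

end

end Concatenation

section Primitive
omit [Algebra ℚ K]
open Finset
variable {φ : Y → Y → (Y →₀ K)} {m : (List Y →₀ K) →ₗ[K] (List Y →₀ K) →ₗ[K] (List Y →₀ K)}

lemma pairPS_concP_shuffle (hm : IsPhiShuffle φ m) (p q : List Y →₀ K) (u v : List Y) :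
    pairPS ⇑(concP p q) (m (word u) (word v)) =
      ∑ i ∈ Finset.range (u.length + 1), ∑ j ∈ Finset.range (v.length + 1),
        pairPS ⇑p (m (word (u.take i)) (word (v.take j))) *
          pairPS ⇑q (m (word (u.drop i)) (word (v.drop j))) := by
  induction p using Finsupp.induction_linear with
  | zero => simp [concP_zero_left, pairPS_zero_left]
  | add p₁ p₂ h₁ h₂ =>
    simp only [concP_add_left, pairPS_coe_add, h₁, h₂, add_mul, Finset.sum_add_distrib]
  | single x a =>
    induction q using Finsupp.induction_linear with
    | zero => simp [concP_zero_right, pairPS_zero_left]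
    | add q₁ q₂ h₁ h₂ =>
      simp only [concP_add_right, pairPS_coe_add, h₁, h₂, mul_add, Finset.sum_add_distrib]
    | single y b =>
      simp only [concP_single_single, pairPS_single_left, hm.apply_append, shuffleSplitSum,
        Finset.mul_sum]
      exact Finset.sum_congr rfl fun i _ => Finset.sum_congr rfl fun j _ => by ring

namespace PrimS

variable {P : List Y →₀ K} (hP : PrimS m ⇑P)
include hP

section
omit [DecidableEq Y]

lemma pairPS_shuffle (u v : List Y) :
    pairPS ⇑P (m (word u) (word v)) = (if v = [] then P u else 0) + (if u = [] then P v else 0) :=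
  hP u v

lemma apply_nil (hm : IsPhiShuffle φ m) : P [] = 0 := by
  have h := hP.pairPS_shuffle [] []
  rw [hm.nil_shuffle, pairPS_word, if_pos rfl] at h
  simpa using h

lemma sum_pairPS_shuffle_mul (F : ℕ → ℕ → K) (u v : List Y) :
    ∑ i ∈ Finset.range (u.length + 1), ∑ j ∈ Finset.range (v.length + 1),
        pairPS ⇑P (m (word (u.take i)) (word (v.take j))) * F i j =
      ∑ i ∈ Finset.range (u.length + 1), P (u.take i) * F i 0 +
        ∑ j ∈ Finset.range (v.length + 1), P (v.take j) * F 0 j := by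
  have h : ∀ i ∈ Finset.range (u.length + 1), ∀ j ∈ Finset.range (v.length + 1),
      pairPS ⇑P (m (word (u.take i)) (word (v.take j))) * F i j =
        (if j = 0 then P (u.take i) * F i 0 else 0) +
          (if i = 0 then P (v.take j) * F 0 j else 0) := by
    intro i hi j hj
    simp only [hP.pairPS_shuffle, List.take_eq_nil_iff_of_mem_range hi,
      List.take_eq_nil_iff_of_mem_range hj]
    split_ifs <;> simp_all [add_mul]
  rw [Finset.sum_congr rfl fun i hi => Finset.sum_congr rfl fun j hj => h i hi j hj]
  simp only [Finset.sum_add_distrib, Finset.sum_ite_eq', Finset.mem_range, Nat.zero_lt_succ,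
    if_true]
  rw [Finset.sum_comm (s := Finset.range (u.length + 1))]
  simp [Finset.sum_ite_eq']

end

theorem pairPS_concPow_shuffle (hm : IsPhiShuffle φ m) (k : ℕ) (u v : List Y) :
    pairPS ⇑(concPow P k) (m (word u) (word v)) =
      ∑ ij ∈ antidiagonal k, (k.choose ij.1 : K) * (concPow P ij.1 u * concPow P ij.2 v) := by
  induction k generalizing u v with
  | zero =>
    rw [Nat.antidiagonal_zero, sum_singleton, concPow, pairPS_word_left, hm.apply_nil]
    by_cases hu : u = [] <;> by_cases hv : v = [] <;> simp [word_apply, hu, hv, eq_comm]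
  | succ k ih =>
    have concPow_succ_apply (j : ℕ) (x : List Y) :
        concPow P (j + 1) x =
          ∑ i ∈ Finset.range (x.length + 1), P (x.take i) * concPow P j (x.drop i) :=
      concP_apply _ _ _
    calc pairPS ⇑(concPow P (k + 1)) (m (word u) (word v))
        = ∑ i ∈ Finset.range (u.length + 1),
              P (u.take i) * pairPS ⇑(concPow P k) (m (word (u.drop i)) (word v)) +
            ∑ j ∈ Finset.range (v.length + 1),
              P (v.take j) * pairPS ⇑(concPow P k) (m (word u) (word (v.drop j))) := by
          rw [concPow, pairPS_concP_shuffle hm, hP.sum_pairPS_shuffle_mul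
            (fun i j => pairPS ⇑(concPow P k) (m (word (u.drop i)) (word (v.drop j))))]
          simp only [List.drop_zero]
      _ = ∑ ij ∈ antidiagonal k, (k.choose ij.1 : K) *
              (concPow P (ij.1 + 1) u * concPow P ij.2 v) +
            ∑ ij ∈ antidiagonal k, (k.choose ij.1 : K) *
              (concPow P ij.1 u * concPow P (ij.2 + 1) v) := by
          simp only [ih, Finset.mul_sum, concPow_succ_apply, Finset.sum_mul]
          rw [Finset.sum_comm, Finset.sum_comm (s := Finset.range (v.length + 1))]
          congr 1 <;> refine Finset.sum_congr rfl fun ij _ => Finset.sum_congr rfl fun i _ => ?_ <;>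
            ring
      _ = ∑ ij ∈ antidiagonal (k + 1), ((k + 1).choose ij.1 : K) *
            (concPow P ij.1 u * concPow P ij.2 v) := by
          rw [sum_antidiagonal_choose_succ_mul
            (fun i j => concPow P i u * concPow P j v), add_comm]
          congr 1
          refine Finset.sum_congr rfl fun ij hij => ?_
          rw [Nat.choose_symm_of_eq_add (mem_antidiagonal.mp hij).symm]

lemma pairPS_concPow_shuffle_right (hm : IsPhiShuffle φ m) (k : ℕ) (u : List Y)
    (q : List Y →₀ K) :
    pairPS ⇑(concPow P k) (m (word u) q) =
      ∑ ij ∈ antidiagonal k, (k.choose ij.1 : K) *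
        (concPow P ij.1 u * pairPS ⇑(concPow P ij.2) q) := by
  induction q using Finsupp.induction_linear with
  | zero => simp [pairPS_zero]
  | add q₁ q₂ h₁ h₂ =>
    simp only [map_add, pairPS_add, h₁, h₂, mul_add, sum_add_distrib]
  | single w c =>
    have single_eq : Finsupp.single w c = c • (word w : List Y →₀ K) := by
      rw [word, Finsupp.smul_single, smul_eq_mul, mul_one]
    rw [single_eq, map_smul, pairPS_smul, hP.pairPS_concPow_shuffle hm, Finset.mul_sum]
    refine sum_congr rfl fun ij _ => ?_
    rw [pairPS_smul, pairPS_word]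
    ring

end PrimS
end Primitive

section Scalars
open PowerSeries Finset
open scoped Nat

/-- The number of surjections from a `k`-set onto a `j`-set. -/
def surjCount (k j : ℕ) : ℚ := k ! * coeff k ((exp ℚ - 1) ^ j)

/-- The coefficient of `X^j` in `log (1 + X)`; `logCoeff 0 = 0` through `x / 0 = 0`. -/
def logCoeff (j : ℕ) : ℚ := (-1) ^ (j - 1) / j

lemma coeff_exp_sub_one (i : ℕ) :
    coeff i (exp ℚ - 1) = if i = 0 then 0 else 1 / (i ! : ℚ) := by
  cases i <;> simp [coeff_exp, coeff_one]

lemma coeff_exp_sub_one_pow_of_lt {k j : ℕ} (h : k < j) : coeff k ((exp ℚ - 1) ^ j) = 0 := by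
  have hX : (X : PowerSeries ℚ) ∣ exp ℚ - 1 :=
    X_dvd_iff.mpr (by simp [← coeff_zero_eq_constantCoeff_apply, coeff_exp_sub_one])
  exact X_pow_dvd_iff.mp (pow_dvd_pow_of_dvd hX j) k h

lemma surjCount_zero_right (k : ℕ) : surjCount k 0 = if k = 0 then 1 else 0 := by
  cases k <;> simp [surjCount, coeff_one]

lemma surjCount_zero_left (j : ℕ) : surjCount 0 j = if j = 0 then 1 else 0 := by
  cases j <;> simp [surjCount, coeff_zero_eq_constantCoeff]

/-- A surjection onto `j + 1` points is a nonempty block of size `a` and a surjection of the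
rest onto `j` points. -/
lemma surjCount_succ (k j : ℕ) :
    surjCount k (j + 1) =
      ∑ ab ∈ antidiagonal k, if ab.1 = 0 then 0 else (k.choose ab.1 : ℚ) * surjCount ab.2 j := by
  rw [surjCount, pow_succ', coeff_mul, Finset.mul_sum]
  refine sum_congr rfl fun ab hab => ?_
  obtain ⟨a, b⟩ := ab
  obtain rfl : a + b = k := mem_antidiagonal.mp hab
  rw [coeff_exp_sub_one]
  split_ifs with ha
  · simp
  · have hfac : ((a + b).choose a * a ! * b ! : ℚ) = (a + b)! := by
      have := Nat.choose_mul_factorial_mul_factorial (Nat.le_add_right a b)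
      rw [Nat.add_sub_cancel_left] at this
      exact_mod_cast this
    rw [surjCount, ← hfac]
    field_simp

lemma derivative_sum_logCoeff_mul_pow (f : PowerSeries ℚ) (N : ℕ) :
    derivative ℚ (∑ j ∈ range (N + 1), C (logCoeff j) * f ^ j) =
      (∑ i ∈ range N, (-f) ^ i) * derivative ℚ f := by
  rw [map_sum, sum_range_succ', Finset.sum_mul]
  simp only [Derivation.leibniz, derivative_C, smul_zero, add_zero, pow_zero,
    Derivation.map_one_eq_zero]
  refine sum_congr rfl fun i _ => ?_
  rw [Derivation.leibniz_pow, Nat.add_sub_cancel, smul_eq_mul, smul_eq_mul, nsmul_eq_mul]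
  have hc : logCoeff (i + 1) * ((i + 1 : ℕ) : ℚ) = (-1) ^ i := by
    rw [logCoeff, Nat.add_sub_cancel]
    field_simp
  rw [neg_pow, ← map_natCast (C (R := ℚ)), ← mul_assoc, ← map_mul, hc]
  simp [map_pow, map_neg, map_one]
  ring

/-- `log (1 + (exp X - 1)) = X`, truncated at order `N`. -/
lemma sum_logCoeff_mul_surjCount {k N : ℕ} (hkN : k ≤ N) :
    ∑ j ∈ range (N + 1), logCoeff j * surjCount k j = if k = 1 then 1 else 0 := by
  rcases Nat.eq_zero_or_pos k with rfl | hk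
  · simp [surjCount_zero_left, logCoeff]
  set A := ∑ j ∈ range (N + 1), C (logCoeff j) * (exp ℚ - 1) ^ j
  have hsum : ∑ j ∈ range (N + 1), logCoeff j * surjCount k j = k ! * coeff k A := by
    simp only [A, map_sum, coeff_C_mul, surjCount, Finset.mul_sum]
    exact sum_congr rfl fun _ _ => by ring
  have hA : derivative ℚ A = 1 - (-(exp ℚ - 1)) ^ N := by
    rw [derivative_sum_logCoeff_mul_pow, map_sub, derivative_exp, Derivation.map_one_eq_zero,
      sub_zero, ← geom_sum_mul_neg]
    ring
  have hcoeff : coeff k A * k = if k = 1 then 1 else 0 := by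
    have h := congrArg (coeff (k - 1)) hA
    have hC : (-1 : PowerSeries ℚ) ^ N = C ((-1) ^ N) := by simp
    rw [coeff_derivative, Nat.sub_add_cancel hk, map_sub, coeff_one, neg_pow, hC, coeff_C_mul,
      coeff_exp_sub_one_pow_of_lt (by omega), mul_zero, sub_zero, Nat.cast_sub hk,
      Nat.cast_one, sub_add_cancel] at h
    rw [h]
    exact if_congr (by omega) rfl rfl
  rw [hsum]
  split_ifs with h1
  · subst h1
    simpa using hcoeff
  · rw [if_neg h1] at hcoeff
    have hk0 : (k : ℚ) ≠ 0 := by exact_mod_cast (by omega : k ≠ 0)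
    rw [(mul_eq_zero.mp hcoeff).resolve_right hk0, mul_zero]

end Scalars

section Cuts
omit [Algebra ℚ K] [DecidableEq Y]

lemma cuts_length_le {w : List Y} {parts : List (List Y)} (h : parts ∈ cuts w) :
    parts.length ≤ w.length := by
  induction w generalizing parts with
  | nil => simp_all [cuts]
  | cons a w ih =>
    simp only [cuts, List.mem_flatMap] at h
    obtain ⟨q, hq, hparts⟩ := h
    have := ih hq
    rcases q with _ | ⟨p, ps⟩ <;> simp at hparts <;> rcases hparts with rfl | rfl <;>
      simp at this ⊢ <;> omega

lemma ne_nil_of_mem_cuts_cons {a : Y} {w : List Y} {parts : List (List Y)}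
    (h : parts ∈ cuts (a :: w)) : parts ≠ [] := by
  simp only [cuts, List.mem_flatMap] at h
  obtain ⟨q, -, hparts⟩ := h
  rcases q with _ | ⟨p, ps⟩ <;> simp at hparts <;> rcases hparts with rfl | rfl <;> simp

lemma sum_map_cuts_eq_sum_range (w : List Y) (H : List Y → List (List Y) → K) :
    ((cuts w).map fun | [] => 0 | u :: ps => H u ps).sum =
      ∑ i ∈ Finset.range w.length, ((cuts (w.drop (i + 1))).map (H (w.take (i + 1)))).sum := by
  induction w generalizing H with
  | nil => simp [cuts]
  | cons a w ih =>
    have expand : ((cuts (a :: w)).map fun | [] => 0 | u :: ps => H u ps).sum =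
        ((cuts w).map (H [a])).sum +
          ((cuts w).map fun | [] => 0 | u :: ps => H (a :: u) ps).sum := by
      simp only [cuts, List.flatMap_def, List.map_flatten, List.sum_flatten, List.map_map]
      rw [← List.sum_map_add]
      congr 1
      refine List.map_congr_left fun parts _ => ?_
      rcases parts with _ | ⟨p, ps⟩ <;> simp
    rw [expand, ih, List.length_cons, Finset.sum_range_succ' _ w.length, add_comm]
    simp only [List.take_succ_cons, List.drop_succ_cons, List.take_zero, List.drop_zero]

end Cuts

section EulerianProjector
open Finset

variable {φ : Y → Y → (Y →₀ K)} {m : (List Y →₀ K) →ₗ[K] (List Y →₀ K) →ₗ[K] (List Y →₀ K)}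
  (hm : IsPhiShuffle φ m) {P : List Y →₀ K} (hP : PrimS m ⇑P)
include hm hP

omit [Algebra ℚ K] in
lemma ite_length_succ_pairPS_concPow_prodM (j k : ℕ) (parts : List (List Y)) :
    (if parts.length = j + 1 then pairPS ⇑(concPow P k) (prodM m (parts.map word)) else 0) =
      match parts with
      | [] => 0
      | u :: ps => ∑ ab ∈ antidiagonal k, (k.choose ab.1 : K) * (concPow P ab.1 u *
          if ps.length = j then pairPS ⇑(concPow P ab.2) (prodM m (ps.map word)) else 0) := by
  rcases parts with _ | ⟨u, ps⟩
  · simp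
  · simp only [List.length_cons, add_left_inj, List.map_cons]
    split_ifs
    · exact hP.pairPS_concPow_shuffle_right hm k u _
    · simp

/-- The `k` factors of `P^k` are distributed surjectively onto the `j` blocks. -/
theorem sum_cuts_pairPS_concPow (j k : ℕ) (w : List Y) :
    ((cuts w).map fun parts =>
        if parts.length = j then pairPS ⇑(concPow P k) (prodM m (parts.map word)) else 0).sum =
      algebraMap ℚ K (surjCount k j) * concPow P k w := by
  have hP0 := hP.apply_nil hm
  induction j generalizing k w with
  | zero =>
    rcases w with _ | ⟨a, w⟩
    · rcases k with _ | k <;>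
        simp [cuts, prodM, pairPS_word, surjCount_zero_right, concPow_apply_nil hP0]
    · rw [List.sum_eq_zero fun x hx => ?_]
      · rcases k with _ | k <;> simp [surjCount_zero_right, concPow, word_apply]
      · obtain ⟨parts, hparts, rfl⟩ := List.mem_map.mp hx
        rw [if_neg (List.length_eq_zero_iff.not.mpr (ne_nil_of_mem_cuts_cons hparts))]
  | succ j ih =>
    calc _ = ∑ i ∈ range w.length, ∑ ab ∈ antidiagonal k, (k.choose ab.1 : K) *
              (concPow P ab.1 (w.take (i + 1)) *
                (algebraMap ℚ K (surjCount ab.2 j) * concPow P ab.2 (w.drop (i + 1)))) := by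
          simp only [ite_length_succ_pairPS_concPow_prodM hm hP, sum_map_cuts_eq_sum_range,
            List.sum_map_finset_sum, List.sum_map_mul_left, ih]
      _ = ∑ ab ∈ antidiagonal k, (k.choose ab.1 : K) * algebraMap ℚ K (surjCount ab.2 j) *
            ∑ i ∈ range w.length,
              concPow P ab.1 (w.take (i + 1)) * concPow P ab.2 (w.drop (i + 1)) := by
          rw [Finset.sum_comm]
          refine sum_congr rfl fun ab _ => ?_
          rw [Finset.mul_sum]
          exact sum_congr rfl fun i _ => by ring
      _ = algebraMap ℚ K (surjCount k (j + 1)) * concPow P k w := by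
          rw [surjCount_succ, map_sum, Finset.sum_mul]
          refine sum_congr rfl fun ab hab => ?_
          rw [sum_range_concPow_take_succ_mul hP0, mem_antidiagonal.mp hab]
          split_ifs <;> simp

theorem piOneS_concPow (k : ℕ) (w : List Y) :
    piOneS m ⇑(concPow P k) w = if k = 1 then concPow P k w else 0 := by
  have by_length : ∀ parts ∈ cuts w,
      algebraMap ℚ K ((-1) ^ (parts.length - 1) / (parts.length : ℚ)) *
          pairPS ⇑(concPow P k) (prodM m (parts.map word)) =
        ∑ j ∈ range (w.length + 1), algebraMap ℚ K (logCoeff j) *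
          if parts.length = j then pairPS ⇑(concPow P k) (prodM m (parts.map word)) else 0 := by
    intro parts hparts
    simp only [mul_ite, mul_zero]
    rw [Finset.sum_ite_eq, if_pos (mem_range.mpr (Nat.lt_succ_of_le (cuts_length_le hparts)))]
    rfl
  calc piOneS m ⇑(concPow P k) w
      = ∑ j ∈ range (w.length + 1),
          algebraMap ℚ K (logCoeff j) * (algebraMap ℚ K (surjCount k j) * concPow P k w) := by
        rw [piOneS, List.map_congr_left by_length, List.sum_map_finset_sum]
        simp only [List.sum_map_mul_left, sum_cuts_pairPS_concPow hm hP]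
    _ = algebraMap ℚ K (∑ j ∈ range (w.length + 1), logCoeff j * surjCount k j) *
          concPow P k w := by
        simp only [map_sum, map_mul, Finset.sum_mul, mul_assoc]
    _ = if k = 1 then concPow P k w else 0 := by
        by_cases hk : k ≤ w.length
        · rw [sum_logCoeff_mul_surjCount hk]
          split_ifs <;> simp
        · rw [concPow_apply_eq_zero_of_length_lt (hP.apply_nil hm) (by omega)]
          simp

end EulerianProjector

def IsLinearT (f : (List Y →₀ K) → (List Y → K)) : Prop :=
  ∀ Q x, f Q x = pairPS (fun t => f (word t) x) Q

section Convolution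
open Finset

omit [Algebra ℚ K] [DecidableEq Y] in
lemma IsLinearT.apply_eq_sum {f : (List Y →₀ K) → (List Y → K)} (hf : IsLinearT f)
    (Q : List Y →₀ K) (S : Finset (List Y)) (hS : Q.support ⊆ S) (x : List Y) :
    f Q x = ∑ t ∈ S, Q t * f (word t) x := by
  rw [hf, pairPS_eq_sum _ _ _ hS]

omit [DecidableEq Y] in
lemma isLinearT_piOneS (m : (List Y →₀ K) →ₗ[K] (List Y →₀ K) →ₗ[K] (List Y →₀ K)) :
    IsLinearT fun Q => piOneS m ⇑Q := by
  intro Q w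
  simp only [piOneS, pairPS_comm Q, pairPS_word_left]
  simp only [pairPS, Finsupp.sum, Finset.mul_sum, List.sum_map_finset_sum]
  refine sum_congr rfl fun t _ => ?_
  rw [← List.sum_map_mul_left]
  exact congrArg List.sum (List.map_congr_left fun _ _ => by ring)

omit [Algebra ℚ K] in
lemma isLinearT_eT : IsLinearT (eT : (List Y →₀ K) → (List Y → K)) := by
  intro Q w
  by_cases hw : w = []
  · subst hw
    have eT_word : (fun t => eT (word t : List Y →₀ K) []) = ⇑(word [] : List Y →₀ K) :=
      funext fun t => by simp [eT, word_apply, eq_comm]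
    rw [eT_word, pairPS_word_left, eT, if_pos rfl]
  · simp only [eT, if_neg hw]
    exact (pairPS_zero_left Q).symm

omit [Algebra ℚ K] [DecidableEq Y] in
lemma isLinearT_convT (Δfn : List Y → (List Y × List Y →₀ K))
    (f g : (List Y →₀ K) → (List Y → K)) : IsLinearT (convT Δfn f g) := by
  intro Q w
  simp only [convT, pairPS]
  refine Finsupp.sum_congr fun t _ => ?_
  rw [word, Finsupp.sum_single_index (zero_mul _), one_mul]

lemma isLinearT_convPowPi (m : (List Y →₀ K) →ₗ[K] (List Y →₀ K) →ₗ[K] (List Y →₀ K))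
    (Δfn : List Y → (List Y × List Y →₀ K)) (n : ℕ) : IsLinearT (convPowPi m Δfn n) := by
  cases n with
  | zero => exact isLinearT_eT
  | succ n => exact isLinearT_convT _ _ _

omit [Algebra ℚ K] [DecidableEq Y] in
lemma convT_eq_sum {m : (List Y →₀ K) →ₗ[K] (List Y →₀ K) →ₗ[K] (List Y →₀ K)}
    {Δfn : List Y → (List Y × List Y →₀ K)} (hΔ : IsDualWitness m Δfn)
    (f g : (List Y →₀ K) → (List Y → K)) (Q : List Y →₀ K) (U : Finset (List Y × List Y))
    (hU : ∀ t ∈ Q.support, (Δfn t).support ⊆ U) (w : List Y) :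
    convT Δfn f g Q w = ∑ x ∈ U, pairPS ⇑Q (m (word x.1) (word x.2)) *
      mulS (f (word x.1)) (g (word x.2)) w := by
  classical
  have hQ : ∀ x : List Y × List Y, pairPS ⇑Q (m (word x.1) (word x.2)) =
      ∑ t ∈ Q.support, Q t * Δfn t x := by
    intro x
    rw [pairPS_comm, pairPS_eq_sum _ _ _ subset_rfl]
    exact sum_congr rfl fun t _ => by rw [hΔ]
  simp only [convT, Finsupp.sum, hQ, Finset.sum_mul]
  rw [Finset.sum_comm]
  refine sum_congr rfl fun t ht => ?_
  rw [Finset.mul_sum, sum_subset (hU t ht) fun x _ hx => by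
    rw [Finsupp.notMem_support_iff.mp hx, zero_mul, mul_zero]]
  exact sum_congr rfl fun _ _ => by ring

omit [Algebra ℚ K] [DecidableEq Y] in
lemma mulS_eq_sum {f g : (List Y →₀ K) → (List Y → K)} (hf : IsLinearT f) (hg : IsLinearT g)
    (p q : List Y →₀ K) (S : Finset (List Y)) (hp : p.support ⊆ S) (hq : q.support ⊆ S)
    (U : Finset (List Y × List Y)) (hU : S ×ˢ S ⊆ U) (w : List Y) :
    mulS (f p) (g q) w = ∑ x ∈ U, p x.1 * q x.2 * mulS (f (word x.1)) (g (word x.2)) w := by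
  have vanish : ∀ x ∈ U, x ∉ S ×ˢ S → p x.1 * q x.2 * mulS (f (word x.1)) (g (word x.2)) w = 0 := by
    intro x _ hx
    rw [mem_product, not_and_or] at hx
    rcases hx with hx | hx
    · rw [Finsupp.notMem_support_iff.mp fun h => hx (hp h), zero_mul, zero_mul]
    · rw [Finsupp.notMem_support_iff.mp fun h => hx (hq h), mul_zero, zero_mul]
  rw [← sum_subset hU vanish, sum_product]
  simp only [mulS, hf.apply_eq_sum p S hp, hg.apply_eq_sum q S hq, Finset.sum_mul_sum]
  simp only [Finset.mul_sum]
  rw [Finset.sum_comm]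
  refine sum_congr rfl fun u _ => ?_
  rw [Finset.sum_comm]
  exact sum_congr rfl fun v _ => sum_congr rfl fun i _ => by ring

end Convolution

section ConvolutionPowers
open Finset

variable {φ : Y → Y → (Y →₀ K)} {m : (List Y →₀ K) →ₗ[K] (List Y →₀ K) →ₗ[K] (List Y →₀ K)}
  (hm : IsPhiShuffle φ m) {P : List Y →₀ K} (hP : PrimS m ⇑P)
  {Δfn : List Y → (List Y × List Y →₀ K)} (hΔ : IsDualWitness m Δfn)
include hm hP hΔ

omit [Algebra ℚ K] in
theorem convT_concPow {f g : (List Y →₀ K) → (List Y → K)} (hf : IsLinearT f)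
    (hg : IsLinearT g) (k : ℕ) (w : List Y) :
    convT Δfn f g (concPow P k) w = ∑ ab ∈ antidiagonal k,
      (k.choose ab.1 : K) * mulS (f (concPow P ab.1)) (g (concPow P ab.2)) w := by
  classical
  set S := (range (k + 1)).biUnion fun i => (concPow P i).support
  have hS : ∀ i ≤ k, (concPow P i).support ⊆ S := fun i hi =>
    subset_biUnion_of_mem (fun i => (concPow P i).support) (mem_range.mpr (by omega))
  set U := ((concPow P k).support.biUnion fun t => (Δfn t).support) ∪ S ×ˢ S
  rw [convT_eq_sum hΔ f g _ U fun t ht =>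
    (subset_biUnion_of_mem (fun t => (Δfn t).support) ht).trans subset_union_left]
  simp only [hP.pairPS_concPow_shuffle hm, Finset.sum_mul]
  rw [Finset.sum_comm]
  refine sum_congr rfl fun ab hab => ?_
  have hab := mem_antidiagonal.mp hab
  rw [mulS_eq_sum hf hg _ _ S (hS _ (by omega)) (hS _ (by omega)) U subset_union_right,
    Finset.mul_sum]
  exact sum_congr rfl fun _ _ => by ring

theorem convPowPi_concPow (n k : ℕ) (w : List Y) :
    convPowPi m Δfn n (concPow P k) w = if k = n then (n.factorial : K) * concPow P k w else 0 := by
  induction n generalizing k w with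
  | zero =>
    rcases k with _ | k
    · by_cases hw : w = [] <;> simp [convPowPi, eT, concPow, word_apply, hw, eq_comm]
    · simp [convPowPi, eT, concPow_apply_nil (hP.apply_nil hm)]
  | succ n ih =>
    have term : ∀ a b : ℕ, (k.choose a : K) *
        mulS (piOneS m fun t => concPow P a t) (convPowPi m Δfn n (concPow P b)) w =
          if (a, b) = (1, n) then (k.choose 1 : K) * n.factorial * concPow P (n + 1) w else 0 := by
      intro a b
      rw [funext (piOneS_concPow hm hP a), funext (ih b)]
      by_cases hab : a = 1 ∧ b = n
      · obtain ⟨rfl, hb⟩ := hab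
        subst b
        have h := concP_apply (concPow P 1) (concPow P n) w
        rw [concPow_add, add_comm] at h
        simp only [if_true, mulS, h, Finset.mul_sum]
        exact sum_congr rfl fun _ _ => by ring
      · rw [if_neg fun h => hab (Prod.ext_iff.mp h)]
        rcases not_and_or.mp hab with h | h <;> simp [h, mulS]
    rw [convPowPi, convT_concPow hm hP hΔ (isLinearT_piOneS m) (isLinearT_convPowPi m Δfn n)]
    simp only [term, Prod.mk.eta, Finset.sum_ite_eq', HasAntidiagonal.mem_antidiagonal]
    by_cases hk : k = n + 1
    · subst hk
      simp [add_comm 1 n, Nat.factorial_succ]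
    · rw [if_neg (by omega), if_neg hk]

end ConvolutionPowers

theorem eulerian_projectors_on_primitive_powers_general (φ : Y → Y → (Y →₀ K))
    (m : (List Y →₀ K) →ₗ[K] (List Y →₀ K) →ₗ[K] (List Y →₀ K))
    (hm : IsPhiShuffle φ m)
    (Δfn : List Y → (List Y × List Y →₀ K)) (hΔ : IsDualWitness m Δfn)
    (P : List Y →₀ K) (hP : PrimS m fun w => P w) :
    (∀ w : List Y, piOneS m (fun t => P t) w = P w) ∧
    (∀ k n : ℕ, 0 < k → 0 < n → ∀ w : List Y,
      algebraMap ℚ K (1 / (Nat.factorial n : ℚ)) * convPowPi m Δfn n (concPow P k) w =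
        if k = n then concPow P k w else 0) := by
  refine ⟨fun w => ?_, fun k n _ _ w => ?_⟩
  · simpa [concPow_one] using piOneS_concPow hm hP 1 w
  · rw [convPowPi_concPow hm hP hΔ]
    split_ifs
    · have hn : (n.factorial : ℚ) ≠ 0 := by positivity
      rw [← mul_assoc, ← map_natCast (algebraMap ℚ K), ← map_mul, one_div_mul_cancel hn, map_one,
        one_mul]
    · rw [mul_zero]

/-- for a primitive polynomial `P`, `π₁(P) = P` and the Eulerian
projectors `π_n = (1/n!) π₁^{⋆ n}` satisfy `π_n(P^k) = δ_{k,n} P^k`. -/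
theorem eulerian_projectors_on_primitive_powers (φ : Y → Y → (Y →₀ K))
    (m : (List Y →₀ K) →ₗ[K] (List Y →₀ K) →ₗ[K] (List Y →₀ K))
    (hm : IsPhiShuffle φ m) (hassoc : PhiAssoc φ) (hcomm : PhiComm φ)
    (Δfn : List Y → (List Y × List Y →₀ K)) (hΔ : IsDualWitness m Δfn)
    (hmod : PhiModerate φ)
    (P : List Y →₀ K) (hP : PrimS m fun w => P w) :
    (∀ w : List Y, piOneS m (fun t => P t) w = P w) ∧
    (∀ k n : ℕ, 0 < k → 0 < n → ∀ w : List Y,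
      algebraMap ℚ K (1 / (Nat.factorial n : ℚ)) * convPowPi m Δfn n (concPow P k) w =
        if k = n then concPow P k w else 0) :=
  eulerian_projectors_on_primitive_powers_general φ m hm Δfn hΔ P hP

end
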